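/- With the Voskresenskij–Klyachko data, the ℤ-total index and ℚ-total index differ: the greatest value of Σᵢ aᵢ over all representations v = Σᵢ₌₁ᵏ aᵢ Sᵢ with aᵢ positive integers and Sᵢ nonzero lattice points of C is 2, while there exists such a representation with aᵢ positive rationals and Σᵢ aᵢ = 5/2. In particular τ_X(ℤ) = 2 < 5/2 ≤ τ_X(ℚ), giving a negative answer to Gongyo's question of whether τ_X(ℤ) = τ_X(ℚ) for every smooth toric Fano variety X. -/
import Mathlib


/-- The vectors `g₀,…,g₅`: `g₀ = (2,−1,−1,−1,−1,−1)` and `g_ℓ = g₀ − e_{ℓ+1}`. -/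
def vkG : Fin 6 → Fin 6 → ℤ :=
  ![![2, -1, -1, -1, -1, -1],
    ![2, -2, -1, -1, -1, -1],
    ![2, -1, -2, -1, -1, -1],
    ![2, -1, -1, -2, -1, -1],
    ![2, -1, -1, -1, -2, -1],
    ![2, -1, -1, -1, -1, -2]]

/-- The vectors `h₀,…,h₅`: `h₀ = (3,−2,−2,−2,−2,−2)` and `h_ℓ = h₀ + e_{ℓ+1}`. -/
def vkH : Fin 6 → Fin 6 → ℤ :=
  ![![3, -2, -2, -2, -2, -2],
    ![3, -1, -2, -2, -2, -2],
    ![3, -2, -1, -2, -2, -2],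
    ![3, -2, -2, -1, -2, -2],
    ![3, -2, -2, -2, -1, -2],
    ![3, -2, -2, -2, -2, -1]]

/-- The anticanonical class `v = −K_X = (5,−3,−3,−3,−3,−3)`. -/
def vkV : Fin 6 → ℤ := ![5, -3, -3, -3, -3, -3]

/-- Coercion `ℤ⁶ → ℚ⁶`. -/
def toQ (x : Fin 6 → ℤ) : Fin 6 → ℚ := fun i => (x i : ℚ)

/-- The 12 generators `g₀,…,g₅,h₀,…,h₅` of the nef cone. -/
def vkGen : Fin 12 → Fin 6 → ℤ := Fin.append vkG vkH

/-- The nef cone `C = {Σ_{g∈G} c_g g : c_g ∈ ℚ, c_g ≥ 0} ⊆ ℚ⁶`. -/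
def vkC : Set (Fin 6 → ℚ) :=
  {w | ∃ c : Fin 12 → ℚ, (∀ i, 0 ≤ c i) ∧ w = ∑ i, c i • toQ (vkGen i)}


lemma gen_mem (i : Fin 12) : toQ (vkGen i) ∈ vkC := by
  refine ⟨fun j => if j = i then 1 else 0, fun j => by positivity, ?_⟩
  simp [ite_smul, Finset.sum_ite_eq']

lemma memG (ℓ : Fin 6) : toQ (vkG ℓ) ∈ vkC := by
  have := gen_mem (Fin.castAdd 6 ℓ)
  rwa [vkGen, Fin.append_left] at this

lemma memH (ℓ : Fin 6) : toQ (vkH ℓ) ∈ vkC := by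
  have := gen_mem (Fin.natAdd 6 ℓ)
  rwa [vkGen, Fin.append_right] at this

lemma vkC_nonneg (φ : Fin 6 → ℚ)
    (hφ : ∀ i : Fin 12, 0 ≤ ∑ j, φ j * toQ (vkGen i) j)
    {w : Fin 6 → ℚ} (hw : w ∈ vkC) : 0 ≤ ∑ j, φ j * w j := by
  obtain ⟨c, hc, rfl⟩ := hw
  have key : ∑ j, φ j * (∑ i, c i • toQ (vkGen i)) j
      = ∑ i, c i * ∑ j, φ j * toQ (vkGen i) j := by
    simp only [Finset.sum_apply, Pi.smul_apply, smul_eq_mul, Finset.mul_sum]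
    rw [Finset.sum_comm]
    exact Finset.sum_congr rfl fun i _ => Finset.sum_congr rfl fun j _ => by ring
  rw [key]
  exact Finset.sum_nonneg fun i _ => mul_nonneg (hc i) (hφ i)

lemma vkC_nonneg' (φ : Fin 6 → ℤ)
    (hφ : ∀ i : Fin 12, 0 ≤ ∑ j, φ j * vkGen i j)
    {w : Fin 6 → ℚ} (hw : w ∈ vkC) : 0 ≤ ∑ j, (φ j : ℚ) * w j := by
  refine vkC_nonneg (fun j => (φ j : ℚ)) (fun i => ?_) hw
  have : ∑ j, (φ j : ℚ) * toQ (vkGen i) j = ((∑ j, φ j * vkGen i j : ℤ) : ℚ) := by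
    push_cast [toQ]; rfl
  rw [this]
  exact_mod_cast hφ i

lemma ineqA {w : Fin 6 → ℚ} (hw : w ∈ vkC) :
    0 ≤ 10 * w 0 + 3 * (w 1 + w 2 + w 3 + w 4 + w 5) := by
  have := vkC_nonneg' (fun j => if j = 0 then 10 else 3) (by decide) hw
  rw [Fin.sum_univ_six] at this
  norm_num [show (2:Fin 6) ≠ 0 by decide, show (3:Fin 6) ≠ 0 by decide,
    show (4:Fin 6) ≠ 0 by decide, show (5:Fin 6) ≠ 0 by decide] at this
  linarith

lemma ineqB (j : Fin 6) (hj : j ≠ 0) {w : Fin 6 → ℚ} (hw : w ∈ vkC) :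
    w 0 + 3 * w j ≤ 0 := by
  have := vkC_nonneg' (fun m => if m = 0 then -1 else if m = j then -3 else 0)
    (by fin_cases j <;> simp_all <;> decide) hw
  rw [Fin.sum_univ_six] at this
  fin_cases j <;> simp_all <;> linarith

lemma psi_ge_two {S : Fin 6 → ℤ} (hS : S ≠ 0) (hmem : toQ S ∈ vkC) :
    2 ≤ 4 * S 0 + S 1 + S 2 + S 3 + S 4 + S 5 := by
  have hA := ineqA hmem
  have hB1 := ineqB 1 (by decide) hmem
  have hB2 := ineqB 2 (by decide) hmem
  have hB3 := ineqB 3 (by decide) hmem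
  have hB4 := ineqB 4 (by decide) hmem
  have hB5 := ineqB 5 (by decide) hmem
  simp only [toQ] at hA hB1 hB2 hB3 hB4 hB5
  have hA' : (0:ℤ) ≤ 10 * S 0 + 3 * (S 1 + S 2 + S 3 + S 4 + S 5) := by exact_mod_cast hA
  have h1 : S 0 + 3 * S 1 ≤ 0 := by exact_mod_cast hB1
  have h2 : S 0 + 3 * S 2 ≤ 0 := by exact_mod_cast hB2
  have h3 : S 0 + 3 * S 3 ≤ 0 := by exact_mod_cast hB3
  have h4 : S 0 + 3 * S 4 ≤ 0 := by exact_mod_cast hB4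
  have h5 : S 0 + 3 * S 5 ≤ 0 := by exact_mod_cast hB5
  have hne : ¬ (S 0 = 0 ∧ S 1 = 0 ∧ S 2 = 0 ∧ S 3 = 0 ∧ S 4 = 0 ∧ S 5 = 0) := by
    rintro ⟨a0, a1, a2, a3, a4, a5⟩
    exact hS (by funext j; fin_cases j <;> assumption)
  omega

lemma sumG : (∑ i : Fin 5, vkG i.succ) = fun j => 2 * vkV j := by decide

/-- With the Voskresenskij–Klyachko data, the ℤ-total index and
ℚ-total index differ: the greatest value of `Σ aᵢ` over all representations
`v = Σ aᵢ Sᵢ` with `aᵢ` positive integers and `Sᵢ` nonzero lattice points of `C`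
is `2`, while there exists such a representation with `aᵢ` positive rationals
and `Σ aᵢ = 5/2`. In particular `τ_X(ℤ) = 2 < 5/2 ≤ τ_X(ℚ)`, answering Gongyo's
question negatively. -/
theorem vk_total_indices_differ :
    IsGreatest {s : ℤ | ∃ k : ℕ, 1 ≤ k ∧ ∃ (a : Fin k → ℤ) (S : Fin k → Fin 6 → ℤ),
      (∀ i, 0 < a i) ∧ (∀ i, S i ≠ 0) ∧ (∀ i, toQ (S i) ∈ vkC) ∧
      (∑ i, a i • S i) = vkV ∧ s = ∑ i, a i} 2 ∧
    (∃ k : ℕ, 1 ≤ k ∧ ∃ (a : Fin k → ℚ) (S : Fin k → Fin 6 → ℤ),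
      (∀ i, 0 < a i) ∧ (∀ i, S i ≠ 0) ∧ (∀ i, toQ (S i) ∈ vkC) ∧
      (∑ i, a i • toQ (S i)) = toQ vkV ∧ (∑ i, a i) = 5 / 2) ∧
    (2 : ℚ) < 5 / 2 := by
  refine ⟨⟨?_, ?_⟩, ?_, by norm_num⟩
  · -- membership : 2 is attained, v = g₀ + h₀
    refine ⟨2, one_le_two, (fun _ => 1), ![vkG 0, vkH 0], fun i => one_pos, ?_, ?_, ?_, ?_⟩
    · intro i; fin_cases i <;> decide
    · intro i; fin_cases i
      · exact memG 0
      · exact memH 0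
    · rw [Fin.sum_univ_two]
      simp only [one_smul]
      decide
    · rw [Fin.sum_univ_two]; norm_num
  · -- upper bound
    rintro s ⟨k, hk, a, S, ha, hS0, hSC, hsum, rfl⟩
    have hpsi : ∀ i, 2 ≤ 4 * S i 0 + S i 1 + S i 2 + S i 3 + S i 4 + S i 5 :=
      fun i => psi_ge_two (hS0 i) (hSC i)
    have hc : ∀ j : Fin 6, ∑ i, a i * S i j = vkV j := by
      intro j
      have := congrFun hsum j
      simpa using this
    have hlin : ∑ i, a i * (4 * S i 0 + S i 1 + S i 2 + S i 3 + S i 4 + S i 5) = 5 := by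
      have expand : (∑ i, a i * (4 * S i 0 + S i 1 + S i 2 + S i 3 + S i 4 + S i 5))
          = 4 * (∑ i, a i * S i 0) + (∑ i, a i * S i 1) + (∑ i, a i * S i 2)
            + (∑ i, a i * S i 3) + (∑ i, a i * S i 4) + (∑ i, a i * S i 5) := by
        rw [Finset.mul_sum, ← Finset.sum_add_distrib, ← Finset.sum_add_distrib,
          ← Finset.sum_add_distrib, ← Finset.sum_add_distrib, ← Finset.sum_add_distrib]
        exact Finset.sum_congr rfl fun i _ => by ring
      rw [expand, hc 0, hc 1, hc 2, hc 3, hc 4, hc 5]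
      decide
    have hle : 2 * (∑ i, a i) ≤ ∑ i, a i * (4 * S i 0 + S i 1 + S i 2 + S i 3 + S i 4 + S i 5) := by
      rw [Finset.mul_sum]
      refine Finset.sum_le_sum fun i _ => ?_
      have h1 := ha i
      have h2 := hpsi i
      nlinarith
    omega
  · -- rational representation with total 5/2
    refine ⟨5, by norm_num, (fun _ => 1/2), (fun i => vkG i.succ),
      fun i => by norm_num, ?_, fun i => memG _, ?_, ?_⟩
    · intro i h
      have := congrFun h 0
      fin_cases i <;> exact absurd this (by decide)
    · funext j
      rw [Finset.sum_apply]
      simp only [Pi.smul_apply, smul_eq_mul, toQ]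
      have hz : ∑ i : Fin 5, vkG i.succ j = 2 * vkV j := by
        rw [← Finset.sum_apply, sumG]
      have hq : ((∑ i : Fin 5, vkG i.succ j : ℤ) : ℚ) = 2 * (vkV j : ℚ) := by
        exact_mod_cast congrArg (fun z : ℤ => (z : ℚ)) hz
      push_cast at hq
      rw [← Finset.mul_sum] at *
      rw [hq]
      ring
    · rw [Fin.sum_univ_five]; norm_num
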